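/- Let $\hat{w}, \xi, w \in \mathbb{R}$ with $W^l \le \hat{w} \le W^u$ and $W^l \le \xi \le W^u$. Then $w = \min(\hat{w}, \xi)$ if and only if there exists $z \in \{0,1\}$ such that $w \le \hat{w}$, $w \le \xi$, $\hat{w} - (W^u - W^l)(1-z) \le w$, and $\xi - (\xi - W^l) z \le w$. -/

import Mathlib

/-!
The binary `z` records which argument attains the minimum: `z = 1` activates the lower bound
`ŵ ≤ w`, `z = 0` activates `ξ ≤ w`. The inactive bound is relaxed to `ŵ - (W^u - W^l) ≤ w` or
`W^l ≤ w`, which the box bounds make redundant once `w` is the minimum.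
-/

theorem eq_min_of_bigM_constraints {α : Type*} [Ring α] [LinearOrder α]
    {Wl Wu a b w z : α} (hz : z = 0 ∨ z = 1) (ha : w ≤ a) (hb : w ≤ b)
    (hza : a - (Wu - Wl) * (1 - z) ≤ w) (hzb : b - (b - Wl) * z ≤ w) :
    w = min a b := by
  rcases hz with rfl | rfl
  · have hbw : b ≤ w := by simpa using hzb
    rw [le_antisymm hb hbw, min_eq_right (hbw.trans ha)]
  · have haw : a ≤ w := by simpa using hza
    rw [le_antisymm ha haw, min_eq_left (haw.trans hb)]

theorem exists_bigM_constraints_min {α : Type*} [CommRing α] [LinearOrder α]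
    [IsStrictOrderedRing α] {Wl Wu a b : α} (hla : Wl ≤ a) (hau : a ≤ Wu) (hlb : Wl ≤ b) :
    ∃ z : α, (z = 0 ∨ z = 1) ∧ min a b ≤ a ∧ min a b ≤ b ∧
      a - (Wu - Wl) * (1 - z) ≤ min a b ∧ b - (b - Wl) * z ≤ min a b := by
  rcases le_total a b with hab | hba
  · refine ⟨1, Or.inr rfl, min_le_left _ _, min_le_right _ _, ?_, ?_⟩ <;>
      simp only [min_eq_left hab, sub_self, mul_zero, mul_one, sub_zero] <;> linarith
  · refine ⟨0, Or.inl rfl, min_le_left _ _, min_le_right _ _, ?_, ?_⟩ <;>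
      simp only [min_eq_right hba, sub_zero, mul_zero, mul_one] <;> linarith

theorem stmt0_general (Wl Wu : ℝ)
    (what ξ w : ℝ) (h1 : Wl ≤ what) (h2 : what ≤ Wu) (h3 : Wl ≤ ξ) :
    w = min what ξ ↔
      ∃ z : ℝ, (z = 0 ∨ z = 1) ∧ w ≤ what ∧ w ≤ ξ ∧
        what - (Wu - Wl) * (1 - z) ≤ w ∧ ξ - (ξ - Wl) * z ≤ w := by
  constructor
  · rintro rfl
    exact exists_bigM_constraints_min h1 h2 h3
  · rintro ⟨z, hz, ha, hb, hza, hzb⟩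
    exact eq_min_of_bigM_constraints hz ha hb hza hzb

/-- Big-M linearization of `w = min (ŵ, ξ)` in the DDU set. -/
theorem stmt0 (Wl Wu : ℝ) (hW : Wl ≤ Wu)
    (what ξ w : ℝ) (h1 : Wl ≤ what) (h2 : what ≤ Wu) (h3 : Wl ≤ ξ) (h4 : ξ ≤ Wu) :
    w = min what ξ ↔
      ∃ z : ℝ, (z = 0 ∨ z = 1) ∧ w ≤ what ∧ w ≤ ξ ∧
        what - (Wu - Wl) * (1 - z) ≤ w ∧ ξ - (ξ - Wl) * z ≤ w :=
  stmt0_general Wl Wu what ξ w h1 h2 h3
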